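/- Invariance of the fundamental invariants Δ₆–Δ₁₀ of K²(E³): for all 3×3 real matrices A, B, C with A and C symmetric, all λ ∈ SO(3) and all δ ∈ ℝ³, with (Ã, B̃, C̃) the transformed parameters, each of the following quantities takes the same value on (Ã, B̃, C̃) as on (A, B, C): Δ₆ = tr(BC²), Δ₇ = tr(C³), Δ₈ = Σ C_{ij}[B_{jk}(B_{ik} + 2B_{ki}) + A_{jk}C_{ki}], Δ₉ = ε_{ikm} ε_{jℓn} B_{ij} B_{kℓ} B_{mn} − 2(B_i^{[i}B_j^{j]} + A_{ij}C_{ij}) B_{kk} + 6 B_{ij} A_{jk} C_{ki}, Δ₁₀ = B_{ij}(B_{ik}C_{kj} − 2B_{jk}C_{ki}) − (B_{ij}B_{ij} + A_{ij}C_{ij}) C_{kk} + A_{ii} C_j^{[j} C_k^{k]}. Here B_i^{[i}B_j^{j]} = ½((tr B)² − tr B²) and C_j^{[j}C_k^{k]} = ½((tr C)² − tr C²). -/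
import Mathlib


open Matrix

/-- 3×3 real matrices. -/
abbrev M3 := Matrix (Fin 3) (Fin 3) ℝ

/-- Membership in SO(3). -/
def SO3 (l : M3) : Prop := lᵀ * l = 1 ∧ l.det = 1

/-- The antisymmetric matrix `W_δ` with rows `(0, δ₃, −δ₂)`, `(−δ₃, 0, δ₁)`,
`(δ₂, −δ₁, 0)`. -/
def Wmat (δ : Fin 3 → ℝ) : M3 :=
  !![0, δ 2, -δ 1; -δ 2, 0, δ 0; δ 1, -δ 0, 0]

/-- Transformed parameter `Ã = λᵀAλ + λᵀBμ + μᵀBᵀλ + μᵀCμ`, with `μ = W_δ λ`. -/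
def tA (A B C l : M3) (δ : Fin 3 → ℝ) : M3 :=
  lᵀ * A * l + lᵀ * B * (Wmat δ * l) + (Wmat δ * l)ᵀ * Bᵀ * l
    + (Wmat δ * l)ᵀ * C * (Wmat δ * l)

/-- Transformed parameter `B̃ = λᵀBλ + μᵀCλ`, with `μ = W_δ λ`. -/
def tB (B C l : M3) (δ : Fin 3 → ℝ) : M3 :=
  lᵀ * B * l + (Wmat δ * l)ᵀ * C * l

/-- Transformed parameter `C̃ = λᵀCλ`. -/
def tC (C l : M3) : M3 := lᵀ * C * l

/-- The Levi-Civita symbol on `Fin 3`. -/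
noncomputable def eps (i j k : Fin 3) : ℝ :=
  (((i : ℕ) : ℝ) - ((j : ℕ) : ℝ)) * (((j : ℕ) : ℝ) - ((k : ℕ) : ℝ))
    * (((k : ℕ) : ℝ) - ((i : ℕ) : ℝ)) / 2

/-- `Δ₆ = tr(BC²)`. -/
def Delta6 (B C : M3) : ℝ := (B * C * C).trace

/-- `Δ₇ = tr(C³)`. -/
def Delta7 (C : M3) : ℝ := (C * C * C).trace

/-- `Δ₈ = C_{ij}[B_{jk}(B_{ik} + 2B_{ki}) + A_{jk}C_{ki}]`. -/
def Delta8 (A B C : M3) : ℝ :=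
  ∑ i : Fin 3, ∑ j : Fin 3, ∑ k : Fin 3,
    C i j * (B j k * (B i k + 2 * B k i) + A j k * C k i)

/-- `Δ₉ = ε_{ikm}ε_{jℓn}B_{ij}B_{kℓ}B_{mn} − 2(B_i^{[i}B_j^{j]} + A_{ij}C_{ij})B_{kk}
  + 6B_{ij}A_{jk}C_{ki}`, with `B_i^{[i}B_j^{j]} = ½((tr B)² − tr B²)`. -/
noncomputable def Delta9 (A B C : M3) : ℝ :=
  (∑ i : Fin 3, ∑ k : Fin 3, ∑ m : Fin 3, ∑ j : Fin 3, ∑ l : Fin 3, ∑ n : Fin 3,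
      eps i k m * eps j l n * B i j * B k l * B m n)
    - 2 * (((1 : ℝ) / 2) * (B.trace ^ 2 - (B * B).trace)
        + ∑ i : Fin 3, ∑ j : Fin 3, A i j * C i j) * B.trace
    + 6 * ∑ i : Fin 3, ∑ j : Fin 3, ∑ k : Fin 3, B i j * A j k * C k i

/-- `Δ₁₀ = B_{ij}(B_{ik}C_{kj} − 2B_{jk}C_{ki}) − (B_{ij}B_{ij} + A_{ij}C_{ij})C_{kk}
  + A_{ii} C_j^{[j}C_k^{k]}`, with `C_j^{[j}C_k^{k]} = ½((tr C)² − tr C²)`. -/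
noncomputable def Delta10 (A B C : M3) : ℝ :=
  (∑ i : Fin 3, ∑ j : Fin 3, ∑ k : Fin 3,
      B i j * (B i k * C k j - 2 * B j k * C k i))
    - ((∑ i : Fin 3, ∑ j : Fin 3, B i j * B i j)
        + ∑ i : Fin 3, ∑ j : Fin 3, A i j * C i j) * C.trace
    + A.trace * (((1 : ℝ) / 2) * (C.trace ^ 2 - (C * C).trace))


/-! ### Auxiliary lemmas -/

private lemma det_f3 (a b c d e f g h i : ℝ) :
    (!![a,b,c;d,e,f;g,h,i] : M3).det = a*e*i - a*f*h - b*d*i + b*f*g + c*d*h - c*e*g := by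
  simp [Matrix.det_fin_three]; try ring

private lemma add_f3 (a b c d e f g h i a' b' c' d' e' f' g' h' i' : ℝ) :
    (!![a,b,c;d,e,f;g,h,i] + !![a',b',c';d',e',f';g',h',i'] : M3)
      = !![a+a',b+b',c+c';d+d',e+e',f+f';g+g',h+h',i+i'] := by
  ext i j; fin_cases i <;> fin_cases j <;> simp

private lemma transpose_f3 (a b c d e f g h i : ℝ) :
    (!![a,b,c;d,e,f;g,h,i] : M3)ᵀ = !![a,d,g;b,e,h;c,f,i] := by
  ext i j; fin_cases i <;> fin_cases j <;> rfl

private lemma epsSum (B : M3) :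
    (∑ i : Fin 3, ∑ k : Fin 3, ∑ m : Fin 3, ∑ j : Fin 3, ∑ l : Fin 3, ∑ n : Fin 3,
      eps i k m * eps j l n * B i j * B k l * B m n) = 6 * B.det := by
  simp [Fin.sum_univ_three, eps, Matrix.det_fin_three]
  ring

private lemma D8tr (A B C : M3) : Delta8 A B C
    = (C*B*Bᵀ).trace + 2*(C*B*B).trace + (C*A*C).trace := by
  simp [Delta8, trace, Matrix.mul_apply, Fin.sum_univ_three, Matrix.transpose_apply]
  ring

private lemma D9tr (A B C : M3) : Delta9 A B C
    = 6*B.det - 2*((1/2)*(B.trace^2 - (B*B).trace) + (A*Cᵀ).trace)*B.trace + 6*(B*A*C).trace := by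
  rw [Delta9, epsSum]
  simp [trace, Matrix.mul_apply, Fin.sum_univ_three, Matrix.transpose_apply]
  ring

private lemma D10tr (A B C : M3) : Delta10 A B C
    = (Bᵀ*B*C).trace - 2*(B*B*C).trace - ((B*Bᵀ).trace + (A*Cᵀ).trace)*C.trace
      + A.trace*((1/2)*(C.trace^2 - (C*C).trace)) := by
  rw [Delta10]
  simp [trace, Matrix.mul_apply, Fin.sum_univ_three, Matrix.transpose_apply]
  ring

private lemma hll {l : M3} (hl : SO3 l) : l * lᵀ = 1 := mul_eq_one_comm.mp hl.1

private lemma mconjmul {l : M3} (hl : SO3 l) (X Y : M3) :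
    (lᵀ*X*l)*(lᵀ*Y*l) = lᵀ*(X*Y)*l := by
  have h : l * (lᵀ * (Y * l)) = Y * l := by rw [← Matrix.mul_assoc, hll hl, Matrix.one_mul]
  simp only [Matrix.mul_assoc, h]

private lemma mconjtrace {l : M3} (hl : SO3 l) (X : M3) : (lᵀ*X*l).trace = X.trace := by
  rw [Matrix.trace_mul_cycle, hll hl, Matrix.one_mul]

private lemma mconjtransp (l X : M3) : (lᵀ*X*l)ᵀ = lᵀ*Xᵀ*l := by
  simp [Matrix.transpose_mul, Matrix.mul_assoc]

private lemma mconjdet {l : M3} (hl : SO3 l) (X : M3) : (lᵀ*X*l).det = X.det := by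
  have h1 : lᵀ.det = 1 := by rw [Matrix.det_transpose, hl.2]
  rw [Matrix.det_mul, Matrix.det_mul, h1, hl.2, one_mul, mul_one]

private lemma tB_eq (B C l : M3) (δ : Fin 3 → ℝ) :
    tB B C l δ = lᵀ*(B + (Wmat δ)ᵀ*C)*l := by
  simp only [tB, Matrix.transpose_mul, Matrix.mul_add, Matrix.add_mul, Matrix.mul_assoc]

private lemma tA_eq (A B C l : M3) (δ : Fin 3 → ℝ) :
    tA A B C l δ = lᵀ*(A + B*(Wmat δ) + (Wmat δ)ᵀ*Bᵀ + (Wmat δ)ᵀ*C*(Wmat δ))*l := by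
  simp only [tA, Matrix.transpose_mul, Matrix.mul_add, Matrix.add_mul, Matrix.mul_assoc]

set_option maxHeartbeats 4000000 in
private lemma delta6_delta (B C : M3) (hC : C.IsSymm) (δ : Fin 3 → ℝ) :
    ((B + (Wmat δ)ᵀ*C)*C*C).trace = (B*C*C).trace := by
  rw [Matrix.eta_fin_three B, Matrix.eta_fin_three C]
  simp only [Wmat, transpose_f3, add_f3, Matrix.mul_fin_three, Matrix.trace_fin_three_of,
    det_f3, Matrix.cons_val', Matrix.cons_val_zero, Matrix.cons_val_one, Matrix.head_cons,
    Matrix.head_fin_const, Matrix.cons_val_two, Matrix.tail_cons, Matrix.of_apply,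
    Matrix.cons_val_fin_one, Matrix.empty_val']
  rw [hC.apply 0 1, hC.apply 0 2, hC.apply 1 2]
  ring

set_option maxHeartbeats 4000000 in
private lemma delta8_delta (A B C : M3) (hA : A.IsSymm) (hC : C.IsSymm) (δ : Fin 3 → ℝ) :
    (C*(B + (Wmat δ)ᵀ*C)*(B + (Wmat δ)ᵀ*C)ᵀ).trace
      + 2*(C*(B + (Wmat δ)ᵀ*C)*(B + (Wmat δ)ᵀ*C)).trace
      + (C*(A + B*(Wmat δ) + (Wmat δ)ᵀ*Bᵀ + (Wmat δ)ᵀ*C*(Wmat δ))*C).trace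
      = (C*B*Bᵀ).trace + 2*(C*B*B).trace + (C*A*C).trace := by
  rw [Matrix.eta_fin_three A, Matrix.eta_fin_three B, Matrix.eta_fin_three C]
  simp only [Wmat, transpose_f3, add_f3, Matrix.mul_fin_three, Matrix.trace_fin_three_of,
    det_f3, Matrix.cons_val', Matrix.cons_val_zero, Matrix.cons_val_one, Matrix.head_cons,
    Matrix.head_fin_const, Matrix.cons_val_two, Matrix.tail_cons, Matrix.of_apply,
    Matrix.cons_val_fin_one, Matrix.empty_val']
  rw [hA.apply 0 1, hA.apply 0 2, hA.apply 1 2, hC.apply 0 1, hC.apply 0 2, hC.apply 1 2]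
  ring

set_option maxHeartbeats 4000000 in
private lemma delta9_delta (A B C : M3) (hA : A.IsSymm) (hC : C.IsSymm) (δ : Fin 3 → ℝ) :
    6 * (B + (Wmat δ)ᵀ*C).det
      - 2*((1/2)*((B + (Wmat δ)ᵀ*C).trace^2 - ((B + (Wmat δ)ᵀ*C)*(B + (Wmat δ)ᵀ*C)).trace)
        + ((A + B*(Wmat δ) + (Wmat δ)ᵀ*Bᵀ + (Wmat δ)ᵀ*C*(Wmat δ))*Cᵀ).trace)*(B + (Wmat δ)ᵀ*C).trace
      + 6*((B + (Wmat δ)ᵀ*C)*(A + B*(Wmat δ) + (Wmat δ)ᵀ*Bᵀ + (Wmat δ)ᵀ*C*(Wmat δ))*C).trace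
    = 6 * B.det - 2*((1/2)*(B.trace^2 - (B*B).trace) + (A*Cᵀ).trace)*B.trace + 6*(B*A*C).trace := by
  rw [Matrix.eta_fin_three A, Matrix.eta_fin_three B, Matrix.eta_fin_three C]
  simp only [Wmat, transpose_f3, add_f3, Matrix.mul_fin_three, Matrix.trace_fin_three_of,
    det_f3, Matrix.cons_val', Matrix.cons_val_zero, Matrix.cons_val_one, Matrix.head_cons,
    Matrix.head_fin_const, Matrix.cons_val_two, Matrix.tail_cons, Matrix.of_apply,
    Matrix.cons_val_fin_one, Matrix.empty_val']
  rw [hA.apply 0 1, hA.apply 0 2, hA.apply 1 2, hC.apply 0 1, hC.apply 0 2, hC.apply 1 2]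
  ring

set_option maxHeartbeats 4000000 in
private lemma delta10_delta (A B C : M3) (hA : A.IsSymm) (hC : C.IsSymm) (δ : Fin 3 → ℝ) :
    ((B + (Wmat δ)ᵀ*C)ᵀ*(B + (Wmat δ)ᵀ*C)*C).trace
      - 2*((B + (Wmat δ)ᵀ*C)*(B + (Wmat δ)ᵀ*C)*C).trace
      - (((B + (Wmat δ)ᵀ*C)*(B + (Wmat δ)ᵀ*C)ᵀ).trace
          + ((A + B*(Wmat δ) + (Wmat δ)ᵀ*Bᵀ + (Wmat δ)ᵀ*C*(Wmat δ))*Cᵀ).trace)*C.trace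
      + (A + B*(Wmat δ) + (Wmat δ)ᵀ*Bᵀ + (Wmat δ)ᵀ*C*(Wmat δ)).trace*((1/2)*(C.trace^2 - (C*C).trace))
      = (Bᵀ*B*C).trace - 2*(B*B*C).trace - ((B*Bᵀ).trace + (A*Cᵀ).trace)*C.trace
        + A.trace*((1/2)*(C.trace^2 - (C*C).trace)) := by
  rw [Matrix.eta_fin_three A, Matrix.eta_fin_three B, Matrix.eta_fin_three C]
  simp only [Wmat, transpose_f3, add_f3, Matrix.mul_fin_three, Matrix.trace_fin_three_of,
    det_f3, Matrix.cons_val', Matrix.cons_val_zero, Matrix.cons_val_one, Matrix.head_cons,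
    Matrix.head_fin_const, Matrix.cons_val_two, Matrix.tail_cons, Matrix.of_apply,
    Matrix.cons_val_fin_one, Matrix.empty_val']
  rw [hA.apply 0 1, hA.apply 0 2, hA.apply 1 2, hC.apply 0 1, hC.apply 0 2, hC.apply 1 2]
  ring

/-- STATEMENT 13: the fundamental invariants `Δ₆,…,Δ₁₀` of `K²(E³)` are invariant
under the parameter transformation rules induced by the isometry group `I(E³)`. -/
theorem invariants_Delta6_to_Delta10
    (A B C : M3) (hA : A.IsSymm) (hC : C.IsSymm)
    (l : M3) (hl : SO3 l) (δ : Fin 3 → ℝ) :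
    Delta6 (tB B C l δ) (tC C l) = Delta6 B C ∧
    Delta7 (tC C l) = Delta7 C ∧
    Delta8 (tA A B C l δ) (tB B C l δ) (tC C l) = Delta8 A B C ∧
    Delta9 (tA A B C l δ) (tB B C l δ) (tC C l) = Delta9 A B C ∧
    Delta10 (tA A B C l δ) (tB B C l δ) (tC C l) = Delta10 A B C := by
  have hQ := tA_eq A B C l δ
  have hP := tB_eq B C l δ
  set W := Wmat δ with hW
  set P : M3 := B + Wᵀ*C with hPd
  set Q : M3 := A + B*W + Wᵀ*Bᵀ + Wᵀ*C*W with hQd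
  have htC : tC C l = lᵀ*C*l := rfl
  refine ⟨?_, ?_, ?_, ?_, ?_⟩
  · show ((tB B C l δ) * (tC C l) * (tC C l)).trace = _
    rw [hP, htC]
    simp only [mconjmul hl, mconjtrace hl]
    exact delta6_delta B C hC δ
  · show ((tC C l) * (tC C l) * (tC C l)).trace = _
    rw [htC]
    simp only [mconjmul hl, mconjtrace hl]
    rfl
  · rw [D8tr, D8tr, hP, hQ, htC]
    simp only [mconjtransp, mconjmul hl, mconjtrace hl]
    exact delta8_delta A B C hA hC δ
  · rw [D9tr, D9tr, hP, hQ, htC]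
    simp only [mconjtransp, mconjmul hl, mconjtrace hl, mconjdet hl]
    exact delta9_delta A B C hA hC δ
  · rw [D10tr, D10tr, hP, hQ, htC]
    simp only [mconjtransp, mconjmul hl, mconjtrace hl, mconjdet hl]
    exact delta10_delta A B C hA hC δ
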